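/- Graphs in Reissner–Nordström(-AdS) solve the vacuum charged constraints (radial content of Lemma 2.4). Let n ≥ 3, M, Q ∈ ℝ, λ ≥ 0, and V_RN(r) = 1 − 2M/r^{n−2} + Q²/r^{2(n−2)} + λ·r². Let I ⊂ (0,∞) be an interval on which V_RN > 0, and let f : I → ℝ be twice differentiable with |V_RN·f′| < 1 on I. Define V_f = V_RN/(1 − (V_RN·f′)²), k_S(r) = −(n−1)·V_RN(r)·f′(r)·√(V_f(r))/r, k_I(r) = (d/dr)[r·k_S(r)/(n−1)], and E_I(r) = √((n−1)(n−2)/2)·Q/(r^{n−1}·√(V_f(r))). Then for all r ∈ I: (i) r^{n−1}·√(V_f(r))·E_I(r) is constant, with charge q = √(2/((n−1)(n−2)))·r^{n−1}·√(V_f)·E_I = Q; (ii) k_I − k_S/(n−1) − r·k_S′/(n−1) = 0; and (iii) R_f + (k_I + k_S)² − k_I² − k_S²/(n−1) − 2·V_f·E_I² + n(n−1)·λ = 0, where R_f(r) = (n−1)·r^{1−n}·(d/dr)[r^{n−2}·(1 − V_f(r))]. That is, the radial Einstein–Maxwell constraints hold with μ̂ = 0 and Ĵ_ν = 0. -/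

import Mathlib

/-!
Write `u = V_RN f'` and let `G = u √V_f` be the tilt of the graph. Since `V_f (1 - u²) = V_RN`,
one has `G² = V_f - V_RN`, while `k_S = -(n-1) G / r` and `k_I = -G'`. Differentiating `G²` turns
`2 k_I k_S` into `(n-1) (V_f - V_RN)' / r`, and the graph's Hamiltonian expression
`R_f + (k_I + k_S)² - k_I² - k_S²/(n-1)` collapses to the scalar curvature of the static slice
`V_RN⁻¹ dr² + r² dΩ²`. For Reissner–Nordström that curvature is
`(n-1)(n-2) Q² / r^{2(n-1)} - n(n-1) λ`, which is the electric energy `2 V_f E_I²` minus the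
cosmological term. The momentum constraint is the product rule applied to `k_I = (r k_S/(n-1))'`,
and Gauss's law holds by construction of `E_I`.
-/

open Real Filter

/-- The Reissner–Nordström(-AdS) metric function
`V_RN(r) = 1 - 2M/r^{n-2} + Q²/r^{2(n-2)} + λ r²`. -/
noncomputable def VRN (n : ℕ) (M Q lam : ℝ) (r : ℝ) : ℝ :=
  1 - 2 * M / r ^ (n - 2) + Q ^ 2 / r ^ (2 * (n - 2)) + lam * r ^ 2

/-- Radial metric function induced on the graph `t = f(r)`:
`V_f = V_RN / (1 - (V_RN f')²)`. -/
noncomputable def Vgraph (n : ℕ) (M Q lam : ℝ) (f : ℝ → ℝ) (r : ℝ) : ℝ :=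
  VRN n M Q lam r / (1 - (VRN n M Q lam r * deriv f r) ^ 2)

/-- Spherical part of the extrinsic curvature of the graph:
`k_S = -(n-1) V_RN f' √(V_f)/r`. -/
noncomputable def kSgraph (n : ℕ) (M Q lam : ℝ) (f : ℝ → ℝ) (r : ℝ) : ℝ :=
  -(((n : ℝ) - 1) * VRN n M Q lam r * deriv f r * Real.sqrt (Vgraph n M Q lam f r)) / r

/-- Radial part of the extrinsic curvature of the graph: `k_I = (d/dr)[r k_S/(n-1)]`. -/
noncomputable def kIgraph (n : ℕ) (M Q lam : ℝ) (f : ℝ → ℝ) (r : ℝ) : ℝ :=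
  deriv (fun ρ => ρ * kSgraph n M Q lam f ρ / ((n : ℝ) - 1)) r

/-- Radial electric field on the graph: `E_I = √((n-1)(n-2)/2)·Q/(r^{n-1}√(V_f))`. -/
noncomputable def EIgraph (n : ℕ) (M Q lam : ℝ) (f : ℝ → ℝ) (r : ℝ) : ℝ :=
  Real.sqrt (((n : ℝ) - 1) * ((n : ℝ) - 2) / 2) * Q
    / (r ^ (n - 1) * Real.sqrt (Vgraph n M Q lam f r))

/-- Scalar curvature of the induced metric: `R_f = (n-1) r^{1-n} (d/dr)[r^{n-2}(1 - V_f)]`. -/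
noncomputable def Rgraph (n : ℕ) (M Q lam : ℝ) (f : ℝ → ℝ) (r : ℝ) : ℝ :=
  ((n : ℝ) - 1) / r ^ (n - 1) * deriv (fun ρ => ρ ^ (n - 2) * (1 - Vgraph n M Q lam f ρ)) r

open Topology

theorem hasDerivAt_pow_of_ne_zero {𝕜 : Type*} [NontriviallyNormedField 𝕜] (m : ℕ) {x : 𝕜}
    (hx : x ≠ 0) : HasDerivAt (fun y => y ^ m) (m * x ^ m / x) x :=
  (hasDerivAt_pow m x).congr_deriv <| by
    rcases m with _ | m
    · simp
    · simp only [Nat.add_sub_cancel, pow_succ]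
      field_simp

noncomputable def radialScalarCurvature (n : ℕ) (V : ℝ → ℝ) (r : ℝ) : ℝ :=
  ((n : ℝ) - 1) / r ^ (n - 1) * deriv (fun ρ => ρ ^ (n - 2) * (1 - V ρ)) r

theorem radialScalarCurvature_eq {n : ℕ} (hn : 2 ≤ n) {V : ℝ → ℝ} {V' r : ℝ}
    (hV : HasDerivAt V V' r) (hr : r ≠ 0) :
    radialScalarCurvature n V r
      = ((n : ℝ) - 1) * (((n : ℝ) - 2) * (1 - V r) / r ^ 2 - V' / r) := by
  obtain ⟨k, rfl⟩ : ∃ k, n = k + 2 := ⟨n - 2, by omega⟩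
  have h := (hasDerivAt_pow_of_ne_zero k hr).fun_mul (hV.const_sub 1)
  rw [radialScalarCurvature, Nat.add_sub_cancel, h.deriv]
  push_cast
  field_simp
  ring

theorem differentiableAt_VRN (n : ℕ) (M Q lam : ℝ) {r : ℝ} (hr : r ≠ 0) :
    DifferentiableAt ℝ (VRN n M Q lam) r := by
  unfold VRN
  fun_prop (disch := exact pow_ne_zero _ hr)

theorem hasDerivAt_VRN {n : ℕ} (hn : 2 ≤ n) (M Q lam : ℝ) {r : ℝ} (hr : r ≠ 0) :
    HasDerivAt (VRN n M Q lam)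
      (((n : ℝ) - 2) * (2 * M / r ^ (n - 2) - 2 * Q ^ 2 / r ^ (2 * (n - 2))) / r
        + 2 * lam * r) r := by
  obtain ⟨k, rfl⟩ : ∃ k, n = k + 2 := ⟨n - 2, by omega⟩
  have h := ((((hasDerivAt_const r (2 * M)).fun_div (hasDerivAt_pow_of_ne_zero k hr)
    (pow_ne_zero _ hr)).const_sub 1).fun_add ((hasDerivAt_const r (Q ^ 2)).fun_div
    (hasDerivAt_pow_of_ne_zero (2 * k) hr) (pow_ne_zero _ hr))).fun_add
    ((hasDerivAt_pow 2 r).const_mul lam)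
  refine h.congr_deriv ?_
  simp only [Nat.add_sub_cancel]
  push_cast
  field_simp
  ring

theorem radialScalarCurvature_VRN {n : ℕ} (hn : 2 ≤ n) (M Q lam : ℝ) {r : ℝ}
    (hr : r ≠ 0) :
    radialScalarCurvature n (VRN n M Q lam) r
      = ((n : ℝ) - 1) * ((n : ℝ) - 2) * Q ^ 2 / r ^ (2 * (n - 1))
        - n * ((n : ℝ) - 1) * lam := by
  rw [radialScalarCurvature_eq hn (hasDerivAt_VRN hn M Q lam hr) hr, VRN]
  obtain ⟨k, rfl⟩ : ∃ k, n = k + 2 := ⟨n - 2, by omega⟩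
  simp only [Nat.add_sub_cancel, show k + 2 - 1 = k + 1 by omega]
  push_cast
  field_simp
  ring

theorem one_sub_sq_pos_of_abs_lt_one {u : ℝ} (hu : |u| < 1) : 0 < 1 - u ^ 2 :=
  sub_pos.mpr ((sq_lt_one_iff_abs_lt_one u).mpr hu)

theorem deriv_mul_div_const {k : ℝ → ℝ} {r : ℝ} (hk : DifferentiableAt ℝ k r) (c : ℝ) :
    deriv (fun ρ => ρ * k ρ / c) r = (k r + r * deriv k r) / c := by
  rw [(((hasDerivAt_id' r).fun_mul hk.hasDerivAt).div_const c).deriv, one_mul]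

section Graph

variable {n : ℕ} {M Q lam : ℝ} {f : ℝ → ℝ} {r : ℝ}

noncomputable def graphTilt (n : ℕ) (M Q lam : ℝ) (f : ℝ → ℝ) (r : ℝ) : ℝ :=
  VRN n M Q lam r * deriv f r * √(Vgraph n M Q lam f r)

theorem kSgraph_eq (n : ℕ) (M Q lam : ℝ) (f : ℝ → ℝ) (r : ℝ) :
    kSgraph n M Q lam f r = -(((n : ℝ) - 1) * graphTilt n M Q lam f r) / r := by
  rw [kSgraph, graphTilt, mul_assoc, mul_assoc, mul_assoc]

theorem Vgraph_pos (hV : 0 < VRN n M Q lam r) (hu : |VRN n M Q lam r * deriv f r| < 1) :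
    0 < Vgraph n M Q lam f r :=
  div_pos hV (one_sub_sq_pos_of_abs_lt_one hu)

theorem graphTilt_sq (hV : 0 < VRN n M Q lam r) (hu : |VRN n M Q lam r * deriv f r| < 1) :
    graphTilt n M Q lam f r ^ 2 = Vgraph n M Q lam f r - VRN n M Q lam r := by
  have hW := Vgraph_pos hV hu
  have h1 := (one_sub_sq_pos_of_abs_lt_one hu).ne'
  rw [graphTilt, mul_pow (VRN n M Q lam r * deriv f r), sq_sqrt hW.le, Vgraph]
  generalize VRN n M Q lam r * deriv f r = u at h1 ⊢
  field_simp
  ring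

theorem eventually_graphTilt_sq (hr : r ≠ 0) (hf : DifferentiableAt ℝ (deriv f) r)
    (hV : 0 < VRN n M Q lam r) (hu : |VRN n M Q lam r * deriv f r| < 1) :
    (fun ρ => graphTilt n M Q lam f ρ ^ 2) =ᶠ[𝓝 r]
      fun ρ => Vgraph n M Q lam f ρ - VRN n M Q lam ρ := by
  have hVc := (differentiableAt_VRN n M Q lam hr).continuousAt
  have huc := (hVc.mul hf.continuousAt).abs
  filter_upwards [hVc.eventually (lt_mem_nhds hV), huc.eventually (gt_mem_nhds hu)]
    with ρ hVρ huρ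
  exact graphTilt_sq hVρ huρ

theorem differentiableAt_Vgraph (hr : r ≠ 0) (hf : DifferentiableAt ℝ (deriv f) r)
    (hu : |VRN n M Q lam r * deriv f r| < 1) :
    DifferentiableAt ℝ (Vgraph n M Q lam f) r :=
  have hV := differentiableAt_VRN n M Q lam hr
  hV.fun_div (((hV.fun_mul hf).fun_pow 2).const_sub 1) (one_sub_sq_pos_of_abs_lt_one hu).ne'

theorem differentiableAt_graphTilt (hr : r ≠ 0) (hf : DifferentiableAt ℝ (deriv f) r)
    (hV : 0 < VRN n M Q lam r) (hu : |VRN n M Q lam r * deriv f r| < 1) :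
    DifferentiableAt ℝ (graphTilt n M Q lam f) r :=
  ((differentiableAt_VRN n M Q lam hr).fun_mul hf).fun_mul
    ((differentiableAt_Vgraph hr hf hu).sqrt (Vgraph_pos hV hu).ne')

theorem differentiableAt_kSgraph (hr : r ≠ 0) (hf : DifferentiableAt ℝ (deriv f) r)
    (hV : 0 < VRN n M Q lam r) (hu : |VRN n M Q lam r * deriv f r| < 1) :
    DifferentiableAt ℝ (kSgraph n M Q lam f) r := by
  simp only [funext (kSgraph_eq n M Q lam f)]
  exact ((differentiableAt_graphTilt hr hf hV hu).const_mul _).neg.fun_div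
    differentiableAt_id hr

theorem kIgraph_eq (hc : (n : ℝ) - 1 ≠ 0) (hr : r ≠ 0) :
    kIgraph n M Q lam f r = -deriv (graphTilt n M Q lam f) r := by
  have h : (fun ρ => ρ * kSgraph n M Q lam f ρ / ((n : ℝ) - 1))
      =ᶠ[𝓝 r] fun ρ => -graphTilt n M Q lam f ρ := by
    filter_upwards [eventually_ne_nhds hr] with ρ hρ
    rw [kSgraph_eq]
    field_simp
  rw [kIgraph, h.deriv_eq, deriv.fun_neg]

theorem Rgraph_add_extrinsic_eq_radialScalarCurvature (hn : 2 ≤ n) (hr : r ≠ 0)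
    (hf : DifferentiableAt ℝ (deriv f) r)
    (hV : 0 < VRN n M Q lam r) (hu : |VRN n M Q lam r * deriv f r| < 1) :
    Rgraph n M Q lam f r + (kIgraph n M Q lam f r + kSgraph n M Q lam f r) ^ 2
        - kIgraph n M Q lam f r ^ 2 - kSgraph n M Q lam f r ^ 2 / ((n : ℝ) - 1)
      = radialScalarCurvature n (VRN n M Q lam) r := by
  have hc : (n : ℝ) - 1 ≠ 0 := by
    have : (2 : ℝ) ≤ n := by exact_mod_cast hn
    linarith
  have hVd := (differentiableAt_VRN n M Q lam hr).hasDerivAt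
  have hWd := (differentiableAt_Vgraph hr hf hu).hasDerivAt
  have hGd := (differentiableAt_graphTilt hr hf hV hu).hasDerivAt
  have hG2 : 2 * graphTilt n M Q lam f r * deriv (graphTilt n M Q lam f) r
      = deriv (Vgraph n M Q lam f) r - deriv (VRN n M Q lam) r := by
    have h := (eventually_graphTilt_sq hr hf hV hu).deriv_eq
    rwa [(hGd.fun_pow 2).deriv, (hWd.fun_sub hVd).deriv, pow_one, Nat.cast_ofNat] at h
  have hGsq := graphTilt_sq (f := f) hV hu
  rw [show Rgraph n M Q lam f r = radialScalarCurvature n (Vgraph n M Q lam f) r from rfl,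
    radialScalarCurvature_eq hn hWd hr, radialScalarCurvature_eq hn hVd hr,
    kIgraph_eq hc hr, kSgraph_eq]
  linear_combination (norm := skip) ((n : ℝ) - 1) / r * hG2
    + ((n : ℝ) - 1) * ((n : ℝ) - 2) / r ^ 2 * hGsq
  field_simp
  ring

theorem pow_mul_sqrt_Vgraph_mul_EIgraph (hr : r ≠ 0) (hW : 0 < Vgraph n M Q lam f r) :
    r ^ (n - 1) * √(Vgraph n M Q lam f r) * EIgraph n M Q lam f r
      = √(((n : ℝ) - 1) * ((n : ℝ) - 2) / 2) * Q := by
  have : √(Vgraph n M Q lam f r) ≠ 0 := (sqrt_pos.mpr hW).ne'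
  rw [EIgraph]
  field_simp

theorem EIgraph_charge_eq (hn : 3 ≤ n) (hr : r ≠ 0) (hW : 0 < Vgraph n M Q lam f r) :
    √(2 / (((n : ℝ) - 1) * ((n : ℝ) - 2))) * r ^ (n - 1) * √(Vgraph n M Q lam f r)
      * EIgraph n M Q lam f r = Q := by
  have hpos : 0 < ((n : ℝ) - 1) * ((n : ℝ) - 2) := by
    have : (3 : ℝ) ≤ n := by exact_mod_cast hn
    nlinarith
  rw [mul_assoc, mul_assoc, ← mul_assoc (r ^ (n - 1)), pow_mul_sqrt_Vgraph_mul_EIgraph hr hW,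
    ← mul_assoc, ← sqrt_mul (by positivity), div_mul_div_comm, mul_comm 2,
    div_self (by positivity), sqrt_one, one_mul]

theorem two_mul_Vgraph_mul_EIgraph_sq (hn : 2 ≤ n) (hr : r ≠ 0)
    (hW : 0 < Vgraph n M Q lam f r) :
    2 * Vgraph n M Q lam f r * EIgraph n M Q lam f r ^ 2
      = ((n : ℝ) - 1) * ((n : ℝ) - 2) * Q ^ 2 / r ^ (2 * (n - 1)) := by
  have hc : 0 ≤ ((n : ℝ) - 1) * ((n : ℝ) - 2) / 2 := by
    have : (2 : ℝ) ≤ n := by exact_mod_cast hn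
    have : 0 ≤ ((n : ℝ) - 1) * ((n : ℝ) - 2) := by nlinarith
    positivity
  have h := congrArg (· ^ 2) (pow_mul_sqrt_Vgraph_mul_EIgraph (f := f) (M := M) (lam := lam) hr hW)
  simp only [mul_pow, sq_sqrt hW.le, sq_sqrt hc] at h
  rw [pow_mul', eq_div_iff (pow_ne_zero _ (pow_ne_zero _ hr))]
  linear_combination 2 * h

end Graph

theorem RN_graph_solves_constraints_general (n : ℕ) (hn : 3 ≤ n) (M Q lam : ℝ)
    (s : Set ℝ) (hs : s ⊆ Set.Ioi (0 : ℝ))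
    (hVRN : ∀ r ∈ s, 0 < VRN n M Q lam r)
    (f : ℝ → ℝ)
    (hf2 : ∀ r ∈ s, DifferentiableAt ℝ (deriv f) r)
    (hspacelike : ∀ r ∈ s, |VRN n M Q lam r * deriv f r| < 1) :
    ∀ r ∈ s,
      -- (i) Gauss law: `r^{n-1}√(V_f)E_I` is constant, with charge `q = Q`
      (r ^ (n - 1) * Real.sqrt (Vgraph n M Q lam f r) * EIgraph n M Q lam f r
          = Real.sqrt (((n : ℝ) - 1) * ((n : ℝ) - 2) / 2) * Q) ∧
      (Real.sqrt (2 / (((n : ℝ) - 1) * ((n : ℝ) - 2))) * r ^ (n - 1)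
          * Real.sqrt (Vgraph n M Q lam f r) * EIgraph n M Q lam f r = Q) ∧
      -- (ii) momentum constraint with `Ĵ_ν = 0`
      (kIgraph n M Q lam f r - kSgraph n M Q lam f r / ((n : ℝ) - 1)
          - r * deriv (kSgraph n M Q lam f) r / ((n : ℝ) - 1) = 0) ∧
      -- (iii) Hamiltonian constraint with `μ̂ = 0`
      (Rgraph n M Q lam f r
          + (kIgraph n M Q lam f r + kSgraph n M Q lam f r) ^ 2
          - kIgraph n M Q lam f r ^ 2
          - kSgraph n M Q lam f r ^ 2 / ((n : ℝ) - 1)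
          - 2 * Vgraph n M Q lam f r * EIgraph n M Q lam f r ^ 2
          + (n : ℝ) * ((n : ℝ) - 1) * lam = 0) := by
  intro r hr
  have hr0 : r ≠ 0 := (Set.mem_Ioi.mp (hs hr)).ne'
  have hV := hVRN r hr
  have hu := hspacelike r hr
  have hW := Vgraph_pos (f := f) hV hu
  refine ⟨pow_mul_sqrt_Vgraph_mul_EIgraph hr0 hW, EIgraph_charge_eq hn hr0 hW, ?_, ?_⟩
  · rw [kIgraph, deriv_mul_div_const (differentiableAt_kSgraph hr0 (hf2 r hr) hV hu)]
    ring
  · rw [Rgraph_add_extrinsic_eq_radialScalarCurvature (by omega) hr0 (hf2 r hr) hV hu,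
      radialScalarCurvature_VRN (by omega) M Q lam hr0,
      two_mul_Vgraph_mul_EIgraph_sq (by omega) hr0 hW]
    ring

/-- Graphs in Reissner–Nordström(-AdS) solve the vacuum charged constraints (radial content of
Lemma 2.4): on an interval where `V_RN > 0`, for a twice differentiable spacelike graph profile
`f`, (i) `r^{n-1}√(V_f)E_I` is constant with charge `q = Q`, (ii) the momentum constraint holds
with `Ĵ_ν = 0`, and (iii) the Hamiltonian constraint holds with `μ̂ = 0`. -/
theorem RN_graph_solves_constraints (n : ℕ) (hn : 3 ≤ n) (M Q lam : ℝ) (hlam : 0 ≤ lam)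
    (s : Set ℝ) (hsopen : IsOpen s) (hs : s ⊆ Set.Ioi (0 : ℝ))
    (hVRN : ∀ r ∈ s, 0 < VRN n M Q lam r)
    (f : ℝ → ℝ) (hf1 : ∀ r ∈ s, DifferentiableAt ℝ f r)
    (hf2 : ∀ r ∈ s, DifferentiableAt ℝ (deriv f) r)
    (hspacelike : ∀ r ∈ s, |VRN n M Q lam r * deriv f r| < 1) :
    ∀ r ∈ s,
      -- (i) Gauss law: `r^{n-1}√(V_f)E_I` is constant, with charge `q = Q`
      (r ^ (n - 1) * Real.sqrt (Vgraph n M Q lam f r) * EIgraph n M Q lam f r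
          = Real.sqrt (((n : ℝ) - 1) * ((n : ℝ) - 2) / 2) * Q) ∧
      (Real.sqrt (2 / (((n : ℝ) - 1) * ((n : ℝ) - 2))) * r ^ (n - 1)
          * Real.sqrt (Vgraph n M Q lam f r) * EIgraph n M Q lam f r = Q) ∧
      -- (ii) momentum constraint with `Ĵ_ν = 0`
      (kIgraph n M Q lam f r - kSgraph n M Q lam f r / ((n : ℝ) - 1)
          - r * deriv (kSgraph n M Q lam f) r / ((n : ℝ) - 1) = 0) ∧
      -- (iii) Hamiltonian constraint with `μ̂ = 0`
      (Rgraph n M Q lam f r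
          + (kIgraph n M Q lam f r + kSgraph n M Q lam f r) ^ 2
          - kIgraph n M Q lam f r ^ 2
          - kSgraph n M Q lam f r ^ 2 / ((n : ℝ) - 1)
          - 2 * Vgraph n M Q lam f r * EIgraph n M Q lam f r ^ 2
          + (n : ℝ) * ((n : ℝ) - 1) * lam = 0) :=
  RN_graph_solves_constraints_general n hn M Q lam s hs hVRN f hf2 hspacelike
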